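/- Let X be a finite nonempty set, f : X → ℝ, and let p : X → [0,1] assign to each x its true risk. Fix γ < γ̂ and suppose the true feasible set S := {x ∈ X : p(x) ≤ γ} is nonempty; let ν* := min_{x ∈ S} f(x). Let ξ_n(x), n = 1, …, N, be random indicators such that for each fixed x they are i.i.d. Bernoulli with mean p(x), and define the (random) SAA optimal value ν̂_N := min{ f(x) : x ∈ X, (1/N)·Σ_n ξ_n(x) ≤ γ̂ } (with ν̂_N := +∞ if no x is SAA-feasible). Then P( ν̂_N ≤ ν* ) ≥ 1 − exp(−2·N·(γ̂ − γ)²); in particular, for δ ∈ (0,1) and N ≥ log(1/δ)/(2(γ̂ − γ)²), the SAA optimal value ν̂_N is a lower bound for the true optimal value ν* with probability at least 1 − δ. -/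

import Mathlib

/-!
Let `x₀` attain `ν*`, so `p x₀ ≤ γ`. Whenever the empirical risk of `x₀` is at most `γ̂`, the
point `x₀` is SAA-feasible and hence `ν̂_N ≤ f x₀ = ν*`. The empirical risk of `x₀` is the mean
of `N` independent `[0, 1]`-valued variables with mean `p x₀ ≤ γ < γ̂`, so by Hoeffding's
inequality it exceeds `γ̂` with probability at most `exp (-2N(γ̂ - γ)²)`.
-/

open MeasureTheory ProbabilityTheory Real

section Hoeffding

variable {Ω : Type*} [MeasurableSpace Ω] {μ : Measure Ω} [IsProbabilityMeasure μ]
  {ι : Type*} [Fintype ι] {X : ι → Ω → ℝ}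

lemma measureReal_sum_sub_integral_ge_le_of_mem_Icc_zero_one (h_indep : iIndepFun X μ)
    (h_meas : ∀ i, AEMeasurable (X i) μ) (h_mem : ∀ i, ∀ᵐ ω ∂μ, X i ω ∈ Set.Icc 0 1) {ε : ℝ}
    (hε : 0 ≤ ε) :
    μ.real {ω | ε ≤ ∑ i, (X i ω - μ[X i])} ≤ exp (-2 * ε ^ 2 / Fintype.card ι) := by
  have h_subG : ∀ i ∈ Finset.univ,
      HasSubgaussianMGF (fun ω ↦ X i ω - μ[X i]) (1 / 4) μ := fun i _ ↦ by
    convert hasSubgaussianMGF_of_mem_Icc (h_meas i) (h_mem i)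
    norm_num
  have h_indep_centered : iIndepFun (fun i ↦ (· - μ[X i]) ∘ X i) μ :=
    h_indep.comp (fun i x ↦ x - μ[X i]) fun _ ↦ measurable_sub_const _
  convert HasSubgaussianMGF.measure_sum_ge_le_of_iIndepFun h_indep_centered h_subG hε using 2
  · rfl
  · push_cast
    rw [Finset.sum_const, Finset.card_univ, nsmul_eq_mul]
    ring

lemma measureReal_mean_gt_le_of_mem_Icc_zero_one (h_indep : iIndepFun X μ)
    (h_meas : ∀ i, AEMeasurable (X i) μ) (h_mem : ∀ i, ∀ᵐ ω ∂μ, X i ω ∈ Set.Icc 0 1) {m γ : ℝ}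
    (h_int : ∀ i, μ[X i] ≤ m) (hmγ : m ≤ γ) :
    μ.real {ω | γ < (1 / Fintype.card ι : ℝ) * ∑ i, X i ω} ≤
      exp (-2 * Fintype.card ι * (γ - m) ^ 2) := by
  set n := Fintype.card ι
  rcases n.eq_zero_or_pos with hn | hn
  · simp [hn]
  have hn' : (0 : ℝ) < n := Nat.cast_pos.2 hn
  have h_sum_int : ∑ i, μ[X i] ≤ n * m := by
    simpa using Finset.sum_le_card_nsmul Finset.univ _ m fun i _ ↦ h_int i
  calc μ.real {ω | γ < (1 / n : ℝ) * ∑ i, X i ω}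
      ≤ μ.real {ω | n * (γ - m) ≤ ∑ i, (X i ω - μ[X i])} := by
        refine measureReal_mono fun ω hω ↦ ?_
        rw [Set.mem_ofPred_eq, one_div_mul_eq_div, lt_div_iff₀' hn'] at hω
        rw [Set.mem_ofPred_eq, Finset.sum_sub_distrib]
        linarith
    _ ≤ exp (-2 * (n * (γ - m)) ^ 2 / n) :=
        measureReal_sum_sub_integral_ge_le_of_mem_Icc_zero_one h_indep h_meas h_mem
          (mul_nonneg hn'.le (sub_nonneg.2 hmγ))
    _ = exp (-2 * n * (γ - m) ^ 2) := by
        congr 1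
        field_simp

end Hoeffding

lemma one_sub_ofReal_le_measure_of_measureReal_compl_le {Ω : Type*} [MeasurableSpace Ω]
    {μ : Measure Ω} [IsProbabilityMeasure μ] {s : Set Ω} {b : ℝ} (h : μ.real sᶜ ≤ b) :
    1 - ENNReal.ofReal b ≤ μ s := by
  rw [tsub_le_iff_right]
  calc 1 = μ Set.univ := measure_univ.symm
    _ ≤ μ s + μ sᶜ := measure_univ_le_add_compl s
    _ ≤ μ s + ENNReal.ofReal b := by
        gcongr
        rw [← ofReal_measureReal]
        exact ENNReal.ofReal_le_ofReal h

lemma Real.exp_neg_mul_le_of_log_one_div_div_le {a δ N : ℝ} (ha : 0 < a) (hδ : 0 < δ)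
    (h : log (1 / δ) / a ≤ N) : exp (-(N * a)) ≤ δ := by
  rw [div_le_iff₀ ha, one_div, log_inv] at h
  exact (le_log_iff_exp_le hδ).1 (by linarith)

theorem saa_optimal_value_lower_bound_general
    {Ω : Type*} [MeasurableSpace Ω] (μ : Measure Ω) [IsProbabilityMeasure μ]
    {X : Type*}
    (f : X → ℝ) (p : X → ℝ)
    (γ γhat : ℝ) (hγ : γ < γhat)
    (νstar : ℝ) (hν : IsLeast (f '' {x | p x ≤ γ}) νstar)
    (N : ℕ)
    (ξ : X → Fin N → Ω → ℝ)
    (hmeas : ∀ x n, Measurable (ξ x n))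
    (h01 : ∀ x n ω, ξ x n ω = 0 ∨ ξ x n ω = 1)
    (hindep : ∀ x, iIndepFun (ξ x) μ)
    (hmean : ∀ x n, ∫ ω, ξ x n ω ∂μ = p x) :
    1 - ENNReal.ofReal (Real.exp (-2 * N * (γhat - γ) ^ 2)) ≤
        μ {ω | sInf ((fun x => (f x : EReal)) ''
            {x | (1 / (N : ℝ)) * ∑ n, ξ x n ω ≤ γhat}) ≤ (νstar : EReal)} ∧
      ∀ δ : ℝ, 0 < δ → δ < 1 → (N : ℝ) ≥ Real.log (1 / δ) / (2 * (γhat - γ) ^ 2) →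
        1 - ENNReal.ofReal δ ≤
          μ {ω | sInf ((fun x => (f x : EReal)) ''
              {x | (1 / (N : ℝ)) * ∑ n, ξ x n ω ≤ γhat}) ≤ (νstar : EReal)} := by
  obtain ⟨x₀, hx₀, rfl⟩ := hν.1
  have h_tail : μ.real {ω | γhat < (1 / (N : ℝ)) * ∑ n, ξ x₀ n ω} ≤
      exp (-2 * N * (γhat - γ) ^ 2) := by
    simpa using measureReal_mean_gt_le_of_mem_Icc_zero_one (hindep x₀)
      (fun n ↦ (hmeas x₀ n).aemeasurable)
      (fun n ↦ ae_of_all _ fun ω ↦ by rcases h01 x₀ n ω with h | h <;> simp [h])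
      (fun n ↦ (hmean x₀ n).trans_le hx₀) hγ.le
  have h_lower : 1 - ENNReal.ofReal (exp (-2 * N * (γhat - γ) ^ 2)) ≤
      μ {ω | sInf ((fun x => (f x : EReal)) ''
        {x | (1 / (N : ℝ)) * ∑ n, ξ x n ω ≤ γhat}) ≤ (f x₀ : EReal)} :=
    one_sub_ofReal_le_measure_of_measureReal_compl_le <| h_tail.trans' <|
      measureReal_mono fun ω hω ↦ by
        rw [Set.mem_compl_iff, Set.mem_ofPred_eq] at hω
        rw [Set.mem_ofPred_eq, ← not_le]
        exact fun h_feasible ↦ hω <| sInf_le ⟨x₀, h_feasible, rfl⟩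
  refine ⟨h_lower, fun δ hδ _ hNδ ↦ h_lower.trans' (tsub_le_tsub_left ?_ 1)⟩
  refine ENNReal.ofReal_le_ofReal ?_
  convert exp_neg_mul_le_of_log_one_div_div_le (by nlinarith) hδ hNδ using 2
  ring

/-- The SAA optimal value `ν̂_N` (with value `+∞` when no point is SAA-feasible)
is a lower bound for the true optimal value `ν*` of the chance-constrained problem
with probability at least `1 − exp(−2N(γ̂−γ)²)`; in particular, with probability at
least `1 − δ` when `N ≥ log(1/δ)/(2(γ̂−γ)²)`. -/
theorem saa_optimal_value_lower_bound
    {Ω : Type*} [MeasurableSpace Ω] (μ : Measure Ω) [IsProbabilityMeasure μ]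
    {X : Type*} [Fintype X] [Nonempty X]
    (f : X → ℝ) (p : X → ℝ) (hp : ∀ x, p x ∈ Set.Icc (0 : ℝ) 1)
    (γ γhat : ℝ) (hγ : γ < γhat)
    (hS : {x | p x ≤ γ}.Nonempty)
    (νstar : ℝ) (hν : IsLeast (f '' {x | p x ≤ γ}) νstar)
    (N : ℕ) (hN : 0 < N)
    (ξ : X → Fin N → Ω → ℝ)
    (hmeas : ∀ x n, Measurable (ξ x n))
    (h01 : ∀ x n ω, ξ x n ω = 0 ∨ ξ x n ω = 1)
    (hindep : ∀ x, iIndepFun (ξ x) μ)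
    (hmean : ∀ x n, ∫ ω, ξ x n ω ∂μ = p x) :
    1 - ENNReal.ofReal (Real.exp (-2 * N * (γhat - γ) ^ 2)) ≤
        μ {ω | sInf ((fun x => (f x : EReal)) ''
            {x | (1 / (N : ℝ)) * ∑ n, ξ x n ω ≤ γhat}) ≤ (νstar : EReal)} ∧
      ∀ δ : ℝ, 0 < δ → δ < 1 → (N : ℝ) ≥ Real.log (1 / δ) / (2 * (γhat - γ) ^ 2) →
        1 - ENNReal.ofReal δ ≤
          μ {ω | sInf ((fun x => (f x : EReal)) ''
              {x | (1 / (N : ℝ)) * ∑ n, ξ x n ω ≤ γhat}) ≤ (νstar : EReal)} :=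
  saa_optimal_value_lower_bound_general μ f p γ γhat hγ νstar hν N ξ hmeas h01 hindep hmean
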